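/- Let $\mathfrak{b}=\mathfrak{b}_1\mathfrak{b}_2$ with $\gcd(\mathrm{N}\mathfrak{b}_1,\mathrm{N}\mathfrak{b}_2)=1$. Then $S_\mathfrak{b}(N;\mathbf{0})=S_{\mathfrak{b}_1}(N;\mathbf{0})\,S_{\mathfrak{b}_2}(N;\mathbf{0})$; i.e. the complete sum $S_\mathfrak{b}(N;\mathbf{0})$ is multiplicative over norm-coprime factorisations. -/

import Mathlib

/-!
Since `N 𝔟₁` and `N 𝔟₂` are coprime there are rational integers `e₁ ∈ 𝔟₁`, `e₂ ∈ 𝔟₂` with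
`e₁ + e₂ = 1`; being rational they are Galois invariant, so `eᵢ ∈ ᴳ𝔟ᵢ` as well. With them,
`(σ₁, σ₂) ↦ σ₁ σ₂` is a bijection from pairs of primitive characters modulo `𝔟₁` and `𝔟₂` onto
primitive characters modulo `𝔟 = 𝔟₁ 𝔟₂`, and `(a₁, a₂) ↦ e₂ a₁ + e₁ a₂` identifies pairs of
residues modulo `ᴳ𝔟₁`, `ᴳ𝔟₂` with residues modulo `ᴳ𝔟 = ᴳ𝔟₁ ∩ ᴳ𝔟₂`. As `σᵢ(F(a) - N)` only
depends on `a` modulo `ᴳ𝔟ᵢ`, the double sum defining `S_𝔟(N; 0)` factors.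
-/

open NumberField
open scoped BigOperators

/-- The action of `Gal(K/ℚ)` on the ring of integers of `K`. -/
noncomputable def gact (K : Type*) [Field K] [NumberField K]
    (τ : K ≃ₐ[ℚ] K) : (𝓞 K) ≃ₐ[ℤ] (𝓞 K) :=
  galRestrict ℤ ℚ K (𝓞 K) τ

/-- The generalised quadratic form attached to a symmetric coefficient tuple
`c : Fin n → Fin n → Gal(K/ℚ) → Gal(K/ℚ) → 𝓞 K`. -/
noncomputable def gqf {K : Type*} [Field K] [NumberField K] {n : ℕ}
    (c : Fin n → Fin n → (K ≃ₐ[ℚ] K) → (K ≃ₐ[ℚ] K) → 𝓞 K)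
    (x : Fin n → 𝓞 K) : 𝓞 K :=
  ∑ i, ∑ j, ∑ τ : K ≃ₐ[ℚ] K, ∑ τ' : K ≃ₐ[ℚ] K,
    c i j τ τ' * gact K τ (x i) * gact K τ' (x j)

/-- The generalised bilinear form attached to `c`. -/
noncomputable def gbf {K : Type*} [Field K] [NumberField K] {n : ℕ}
    (c : Fin n → Fin n → (K ≃ₐ[ℚ] K) → (K ≃ₐ[ℚ] K) → 𝓞 K)
    (x y : Fin n → 𝓞 K) : 𝓞 K :=
  ∑ i, ∑ j, ∑ τ : K ≃ₐ[ℚ] K, ∑ τ' : K ≃ₐ[ℚ] K,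
    c i j τ τ' * gact K τ (x i) * gact K τ' (y j)

/-- The `G`-invariant ideal `ᴳ𝔟 = ⋂_{τ ∈ G} 𝔟^{τ⁻¹}`. -/
noncomputable def GIdeal {K : Type*} [Field K] [NumberField K]
    (G : Set (K ≃ₐ[ℚ] K)) (𝔟 : Ideal (𝓞 K)) : Ideal (𝓞 K) :=
  ⨅ τ ∈ G, Ideal.map (gact K τ.symm) 𝔟

lemma gbf_add_right {K : Type*} [Field K] [NumberField K] {n : ℕ}
    (c : Fin n → Fin n → (K ≃ₐ[ℚ] K) → (K ≃ₐ[ℚ] K) → 𝓞 K)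
    (a x y : Fin n → 𝓞 K) : gbf c a (x + y) = gbf c a x + gbf c a y := by
  simp [gbf, Pi.add_apply, map_add, mul_add, Finset.sum_add_distrib]

lemma gbf_neg_right {K : Type*} [Field K] [NumberField K] {n : ℕ}
    (c : Fin n → Fin n → (K ≃ₐ[ℚ] K) → (K ≃ₐ[ℚ] K) → 𝓞 K)
    (a x : Fin n → 𝓞 K) : gbf c a (-x) = - gbf c a x := by
  simp [gbf, Pi.neg_apply, map_neg, mul_neg, Finset.sum_neg_distrib]

/-- The subgroup `ℋ_𝔟 = {h ∈ 𝓞ⁿ : 2 B(a; h) ∈ 𝔟 ∀ a}`. -/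
noncomputable def Hsub {K : Type*} [Field K] [NumberField K] {n : ℕ}
    (c : Fin n → Fin n → (K ≃ₐ[ℚ] K) → (K ≃ₐ[ℚ] K) → 𝓞 K)
    (𝔟 : Ideal (𝓞 K)) : AddSubgroup (Fin n → 𝓞 K) where
  carrier := {h | ∀ a, 2 * gbf c a h ∈ 𝔟}
  zero_mem' := by
    intro a
    have : gbf c a (0 : Fin n → 𝓞 K) = 0 := by
      simp [gbf]
    simp [this]
  add_mem' := by
    intro x y hx hy a
    rw [gbf_add_right, mul_add]
    exact Ideal.add_mem _ (hx a) (hy a)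
  neg_mem' := by
    intro x hx a
    rw [gbf_neg_right, mul_neg]
    exact (Ideal.neg_mem_iff _).mpr (hx a)

/-- The subgroup `(ᴳ𝔟)ⁿ ⊆ 𝓞ⁿ`. -/
noncomputable def GIdealPow {K : Type*} [Field K] [NumberField K] (n : ℕ)
    (G : Set (K ≃ₐ[ℚ] K)) (𝔟 : Ideal (𝓞 K)) : AddSubgroup (Fin n → 𝓞 K) :=
  AddSubgroup.pi Set.univ fun _ => (GIdeal G 𝔟).toAddSubgroup

/-- `ψ(x) = exp(2πi Tr_{K/ℚ}(x))`. -/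
noncomputable def psiK (K : Type*) [Field K] [NumberField K] (x : K) : ℂ :=
  Complex.exp (2 * Real.pi * Complex.I * ((Algebra.trace ℚ K x : ℚ) : ℂ))

/-- `σ : 𝓞 K → ℂ` is invariant under translation by the ideal `𝔟`. -/
def IsCharModI {K : Type*} [Field K] [NumberField K] (𝔟 : Ideal (𝓞 K))
    (σ : 𝓞 K → ℂ) : Prop :=
  ∀ x z : 𝓞 K, z ∈ 𝔟 → σ (x + z) = σ x

/-- The set of primitive additive characters modulo `𝔟`. -/
def PrimChars (K : Type*) [Field K] [NumberField K] (𝔟 : Ideal (𝓞 K)) :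
    Set (𝓞 K → ℂ) :=
  {σ | (σ 0 = 1 ∧ ∀ x y, σ (x + y) = σ x * σ y) ∧ IsCharModI 𝔟 σ ∧
    ∀ 𝔟₁ : Ideal (𝓞 K), 𝔟₁ ∣ 𝔟 → 𝔟₁ ≠ 𝔟 → ¬ IsCharModI 𝔟₁ σ}

/-- The exponential sum
`S_𝔟(N; m) = ∑*_{σ mod 𝔟} ∑_{a mod ᴳ𝔟} σ(F(a) - N) ψ(m.a)`,
where `R` is a complete set of representatives modulo `(ᴳ𝔟)ⁿ`. -/
noncomputable def expSum {K : Type*} [Field K] [NumberField K] {n : ℕ}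
    (c : Fin n → Fin n → (K ≃ₐ[ℚ] K) → (K ≃ₐ[ℚ] K) → 𝓞 K)
    (𝔟 : Ideal (𝓞 K)) (R : Finset (Fin n → 𝓞 K)) (N : 𝓞 K)
    (m : Fin n → K) : ℂ :=
  ∑ᶠ σ ∈ PrimChars K 𝔟, ∑ a ∈ R,
    σ (gqf c a - N) * psiK K (∑ i, m i * ((a i : K)))


section ResidueSystem

variable {A ι : Type*} [CommRing A]

def IsResidueSystem (I : Ideal A) (R : Finset (ι → A)) : Prop :=
  ∀ x : ι → A, ∃! r, r ∈ R ∧ ∀ i, x i - r i ∈ I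

namespace IsResidueSystem

variable {I : Ideal A} {R : Finset (ι → A)} (h : IsResidueSystem I R)

noncomputable def rep (x : ι → A) : ι → A := (h x).choose

lemma rep_mem (x : ι → A) : h.rep x ∈ R := (h x).choose_spec.1.1

lemma mk_rep (x : ι → A) (i : ι) :
    Ideal.Quotient.mk I (h.rep x i) = Ideal.Quotient.mk I (x i) :=
  (Ideal.Quotient.eq.mpr ((h x).choose_spec.1.2 i)).symm

lemma rep_eq {x r : ι → A} (hr : r ∈ R)
    (hxr : ∀ i, Ideal.Quotient.mk I (x i) = Ideal.Quotient.mk I (r i)) : h.rep x = r :=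
  ((h x).choose_spec.2 r ⟨hr, fun i => Ideal.Quotient.eq.mp (hxr i)⟩).symm

open Ideal.Quotient in
/-- Chinese remainder theorem: for `e₁ ∈ I₁`, `e₂ ∈ I₂` with `e₁ + e₂ = 1`, the map
`(a₁, a₂) ↦ e₂ a₁ + e₁ a₂` followed by reduction into `R` identifies `R₁ × R₂` with `R`. -/
theorem sum_mul_sum {M : Type*} [NonUnitalNonAssocSemiring M] {I₁ I₂ : Ideal A}
    {R₁ R₂ : Finset (ι → A)} (hI : IsCoprime I₁ I₂) (h₁ : IsResidueSystem I₁ R₁)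
    (h₂ : IsResidueSystem I₂ R₂) (h : IsResidueSystem (I₁ ⊓ I₂) R) {f₁ f₂ : (ι → A) → M}
    (hf₁ : ∀ x y, (∀ i, mk I₁ (x i) = mk I₁ (y i)) → f₁ x = f₁ y)
    (hf₂ : ∀ x y, (∀ i, mk I₂ (x i) = mk I₂ (y i)) → f₂ x = f₂ y) :
    (∑ a ∈ R₁, f₁ a) * (∑ a ∈ R₂, f₂ a) = ∑ a ∈ R, f₁ a * f₂ a := by
  obtain ⟨e₁, he₁, e₂, he₂, he⟩ := Ideal.isCoprime_iff_exists.mp hI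
  have mk_e₂ : mk I₁ e₂ = 1 := by
    simpa [eq_zero_iff_mem.mpr he₁] using congrArg (mk I₁) he
  have mk_e₁ : mk I₂ e₁ = 1 := by
    simpa [eq_zero_iff_mem.mpr he₂] using congrArg (mk I₂) he
  let mix (a : (ι → A) × (ι → A)) : ι → A := fun i => e₂ * a.1 i + e₁ * a.2 i
  have mk_mix₁ (a) (i) : mk I₁ (mix a i) = mk I₁ (a.1 i) := by
    simp [mix, mk_e₂, eq_zero_iff_mem.mpr he₁]
  have mk_mix₂ (a) (i) : mk I₂ (mix a i) = mk I₂ (a.2 i) := by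
    simp [mix, mk_e₁, eq_zero_iff_mem.mpr he₂]
  have mk_inf {J : Ideal A} (hJ : I₁ ⊓ I₂ ≤ J) {x y : A} (hxy : mk (I₁ ⊓ I₂) x = mk _ y) :
      mk J x = mk J y :=
    Ideal.Quotient.eq.mpr (hJ (Ideal.Quotient.eq.mp hxy))
  rw [Finset.sum_mul_sum, ← Finset.sum_product']
  refine Finset.sum_nbij' (fun a => h.rep (mix a)) (fun r => (h₁.rep r, h₂.rep r))
    (fun a _ => h.rep_mem _) (fun r _ => Finset.mem_product.mpr ⟨h₁.rep_mem r, h₂.rep_mem r⟩)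
    (fun a ha => ?_) (fun r hr => ?_) (fun a _ => ?_)
  · obtain ⟨ha₁, ha₂⟩ := Finset.mem_product.mp ha
    refine Prod.ext (h₁.rep_eq ha₁ fun i => ?_) (h₂.rep_eq ha₂ fun i => ?_)
    · rw [mk_inf inf_le_left (h.mk_rep _ i), mk_mix₁]
    · rw [mk_inf inf_le_right (h.mk_rep _ i), mk_mix₂]
  · refine h.rep_eq hr fun i => ?_
    rw [Ideal.Quotient.eq, Submodule.mem_inf, ← Ideal.Quotient.eq, ← Ideal.Quotient.eq,
      mk_mix₁, mk_mix₂]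
    exact ⟨h₁.mk_rep r i, h₂.mk_rep r i⟩
  · congr 1
    · exact hf₁ _ _ fun i => by rw [mk_inf inf_le_left (h.mk_rep _ i), mk_mix₁]
    · exact hf₂ _ _ fun i => by rw [mk_inf inf_le_right (h.mk_rep _ i), mk_mix₂]

end IsResidueSystem

end ResidueSystem

theorem finsum_mem_mul_finsum_mem {α β M : Type*} [NonUnitalNonAssocSemiring M] {s : Set α}
    {t : Set β} (hs : s.Finite) (ht : t.Finite) (f : α → M) (g : β → M) :
    (∑ᶠ a ∈ s, f a) * (∑ᶠ b ∈ t, g b) = ∑ᶠ p ∈ s ×ˢ t, f p.1 * g p.2 := by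
  rw [finsum_mem_eq_finite_toFinset_sum _ hs, finsum_mem_eq_finite_toFinset_sum _ ht,
    finsum_mem_eq_finite_toFinset_sum _ (hs.prod ht), ← Set.Finite.toFinset_prod,
    Finset.sum_mul_sum, Finset.sum_product]

theorem Ideal.isCoprime_of_intCast_mem {A : Type*} [CommRing A] {I J : Ideal A} {a b : ℤ}
    (hab : IsCoprime a b) (ha : (a : A) ∈ I) (hb : (b : A) ∈ J) : IsCoprime I J := by
  obtain ⟨u, v, huv⟩ := hab
  refine Ideal.isCoprime_iff_exists.mpr
    ⟨u * a, I.mul_mem_left _ ha, v * b, J.mul_mem_left _ hb, ?_⟩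
  exact_mod_cast congrArg (Int.cast : ℤ → A) huv

theorem Ideal.isCoprime_of_coprime_absNorm {S : Type*} [CommRing S] [IsDedekindDomain S]
    [Module.Free ℤ S] {I J : Ideal S}
    (h : (Ideal.absNorm I).Coprime (Ideal.absNorm J)) : IsCoprime I J :=
  Ideal.isCoprime_of_intCast_mem (Nat.isCoprime_iff_coprime.mpr h)
    (by exact_mod_cast I.absNorm_mem) (by exact_mod_cast J.absNorm_mem)

section Galois

variable {K : Type*} [Field K] [NumberField K]

lemma gact_symm (τ : K ≃ₐ[ℚ] K) : gact K τ.symm = (gact K τ).symm :=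
  map_inv (galRestrict ℤ ℚ K (𝓞 K)) τ

lemma mem_GIdeal_iff {G : Set (K ≃ₐ[ℚ] K)} {𝔟 : Ideal (𝓞 K)} {x : 𝓞 K} :
    x ∈ GIdeal G 𝔟 ↔ ∀ τ ∈ G, gact K τ x ∈ 𝔟 := by
  simp [GIdeal, Ideal.mem_map_of_equiv, gact_symm, AlgEquiv.symm_apply_eq]

lemma intCast_mem_GIdeal {G : Set (K ≃ₐ[ℚ] K)} {𝔟 : Ideal (𝓞 K)} {a : ℤ}
    (ha : (a : 𝓞 K) ∈ 𝔟) : (a : 𝓞 K) ∈ GIdeal G 𝔟 :=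
  mem_GIdeal_iff.mpr fun τ _ => by rwa [map_intCast]

lemma GIdeal_inf (G : Set (K ≃ₐ[ℚ] K)) (𝔟₁ 𝔟₂ : Ideal (𝓞 K)) :
    GIdeal G (𝔟₁ ⊓ 𝔟₂) = GIdeal G 𝔟₁ ⊓ GIdeal G 𝔟₂ := by
  ext x
  simp only [Submodule.mem_inf, mem_GIdeal_iff, ← forall_and]

lemma isCoprime_GIdeal_of_coprime_absNorm (G : Set (K ≃ₐ[ℚ] K)) {𝔟₁ 𝔟₂ : Ideal (𝓞 K)}
    (h : (Ideal.absNorm 𝔟₁).Coprime (Ideal.absNorm 𝔟₂)) :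
    IsCoprime (GIdeal G 𝔟₁) (GIdeal G 𝔟₂) :=
  Ideal.isCoprime_of_intCast_mem (Nat.isCoprime_iff_coprime.mpr h)
    (intCast_mem_GIdeal (by exact_mod_cast 𝔟₁.absNorm_mem))
    (intCast_mem_GIdeal (by exact_mod_cast 𝔟₂.absNorm_mem))

lemma gqf_sub_gqf_mem {n : ℕ} {c : Fin n → Fin n → (K ≃ₐ[ℚ] K) → (K ≃ₐ[ℚ] K) → 𝓞 K}
    {G : Set (K ≃ₐ[ℚ] K)} (hG : ∀ i j τ τ', c i j τ τ' ≠ 0 → τ ∈ G ∧ τ' ∈ G)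
    {𝔞 : Ideal (𝓞 K)} {x y : Fin n → 𝓞 K} (h : ∀ i, x i - y i ∈ GIdeal G 𝔞) :
    gqf c x - gqf c y ∈ 𝔞 := by
  have mk_gact {τ} (hτ : τ ∈ G) (i) :
      Ideal.Quotient.mk 𝔞 (gact K τ (x i)) = Ideal.Quotient.mk 𝔞 (gact K τ (y i)) :=
    Ideal.Quotient.eq.mpr (by rw [← map_sub]; exact mem_GIdeal_iff.mp (h i) τ hτ)
  rw [← Ideal.Quotient.eq]
  simp only [gqf, map_sum, map_mul]
  refine Finset.sum_congr rfl fun i _ => Finset.sum_congr rfl fun j _ =>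
    Finset.sum_congr rfl fun τ _ => Finset.sum_congr rfl fun τ' _ => ?_
  by_cases hc : c i j τ τ' = 0
  · simp [hc]
  · obtain ⟨hτ, hτ'⟩ := hG i j τ τ' hc
    rw [mk_gact hτ, mk_gact hτ']

end Galois

section Characters

variable {K : Type*} [Field K] [NumberField K] {𝔟 I : Ideal (𝓞 K)} {σ : 𝓞 K → ℂ}

lemma IsCharModI.apply_eq_of_sub_mem (h : IsCharModI 𝔟 σ) {x y : 𝓞 K} (hxy : x - y ∈ 𝔟) :
    σ x = σ y := by
  simpa using h y (x - y) hxy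

lemma IsCharModI.apply_eq_one (h : IsCharModI 𝔟 σ) (h0 : σ 0 = 1) {z : 𝓞 K} (hz : z ∈ 𝔟) :
    σ z = 1 := by
  rw [h.apply_eq_of_sub_mem (sub_zero z ▸ hz), h0]

lemma IsCharModI.sup (h : IsCharModI 𝔟 σ) (hI : IsCharModI I σ) : IsCharModI (𝔟 ⊔ I) σ := by
  intro x z hz
  obtain ⟨y, hy, w, hw, rfl⟩ := Submodule.mem_sup.mp hz
  rw [← add_assoc, hI _ _ hw, h _ _ hy]

lemma isCharModI_of_apply_eq_one (hadd : ∀ x y, σ (x + y) = σ x * σ y)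
    (h : ∀ z ∈ 𝔟, σ z = 1) : IsCharModI 𝔟 σ :=
  fun x z hz => by rw [hadd, h z hz, mul_one]

lemma mem_primChars_iff : σ ∈ PrimChars K 𝔟 ↔
    (σ 0 = 1 ∧ ∀ x y, σ (x + y) = σ x * σ y) ∧ IsCharModI 𝔟 σ ∧
      ∀ I, IsCharModI I σ → I ≤ 𝔟 := by
  refine and_congr_right fun _ => and_congr_right fun h => ⟨fun hprim I hI => ?_, ?_⟩
  · by_contra hle
    exact hprim (𝔟 ⊔ I) (Ideal.dvd_iff_le.mpr le_sup_left)
      (fun heq => hle (heq ▸ le_sup_right)) (h.sup hI)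
  · rintro hmax 𝔟' hdvd hne hI
    exact hne (le_antisymm (hmax 𝔟' hI) (Ideal.dvd_iff_le.mp hdvd))

lemma pow_absNorm_eq_one (hσ : σ ∈ PrimChars K 𝔟) (x : 𝓞 K) : σ x ^ Ideal.absNorm 𝔟 = 1 := by
  let ψ : AddChar (𝓞 K) ℂ := ⟨σ, hσ.1.1, hσ.1.2⟩
  rw [show σ x = ψ x from rfl, ← AddChar.map_nsmul_eq_pow, nsmul_eq_mul]
  exact hσ.2.1.apply_eq_one hσ.1.1 (𝔟.mul_mem_right _ 𝔟.absNorm_mem)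

/-- A primitive character factors through the finite ring `𝓞 K ⧸ 𝔟` and takes values in the
`N 𝔟`-th roots of unity. -/
lemma finite_primChars (hb : 𝔟 ≠ ⊥) : (PrimChars K 𝔟).Finite := by
  have := Ideal.finiteQuotientOfFreeOfNeBot 𝔟 hb
  have hN : 0 < Ideal.absNorm 𝔟 := Nat.pos_of_ne_zero (mt Ideal.absNorm_eq_zero_iff.mp hb)
  let μ : Set ℂ := {z | z ^ Ideal.absNorm 𝔟 = 1}
  have : Finite μ :=
    (Polynomial.nthRoots (Ideal.absNorm 𝔟) (1 : ℂ)).toFinset.finite_toSet.subset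
      fun z (hz : z ^ _ = 1) => by simp [Polynomial.mem_nthRoots hN, hz]
  refine (Set.finite_range fun (φ : 𝓞 K ⧸ 𝔟 → μ) x => (φ (Ideal.Quotient.mk 𝔟 x) : ℂ)).subset
    fun σ hσ => ⟨fun q => ⟨σ q.out, pow_absNorm_eq_one hσ _⟩, funext fun x => ?_⟩
  exact hσ.2.1.apply_eq_of_sub_mem (Ideal.Quotient.eq.mp (Ideal.Quotient.mk_out _))

end Characters

section CRT

variable {K : Type*} [Field K] [NumberField K] {𝔟₁ 𝔟₂ I : Ideal (𝓞 K)} {e₁ e₂ : 𝓞 K}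
  {σ σ₁ σ₂ : 𝓞 K → ℂ}

lemma IsCharModI.apply_mul_eq (h : IsCharModI 𝔟₁ σ) (he : e₁ + e₂ = 1) (he₁ : e₁ ∈ 𝔟₁)
    (x : 𝓞 K) : σ (e₂ * x) = σ x :=
  h.apply_eq_of_sub_mem (by
    rw [show e₂ * x - x = -(e₁ * x) by linear_combination x * he]
    exact 𝔟₁.neg_mem (𝔟₁.mul_mem_right x he₁))

lemma isCharModI_of_isCharModI_mul (he : e₁ + e₂ = 1) (he₁ : e₁ ∈ 𝔟₁) (he₂ : e₂ ∈ 𝔟₂)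
    (h₁ : σ₁ ∈ PrimChars K 𝔟₁) (h₂ : σ₂ ∈ PrimChars K 𝔟₂) (hI : IsCharModI I (σ₁ * σ₂)) :
    IsCharModI I σ₁ := by
  refine isCharModI_of_apply_eq_one h₁.1.2 fun z hz => ?_
  calc σ₁ z = σ₁ (e₂ * z) * σ₂ (e₂ * z) := by
        rw [h₁.2.1.apply_mul_eq he he₁, h₂.2.1.apply_eq_one h₂.1.1 (𝔟₂.mul_mem_right z he₂),
          mul_one]
    _ = 1 := hI.apply_eq_one (by simp [h₁.1.1, h₂.1.1]) (I.mul_mem_left e₂ hz)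

lemma mul_mem_primChars (hcop : IsCoprime 𝔟₁ 𝔟₂) (h₁ : σ₁ ∈ PrimChars K 𝔟₁)
    (h₂ : σ₂ ∈ PrimChars K 𝔟₂) : σ₁ * σ₂ ∈ PrimChars K (𝔟₁ * 𝔟₂) := by
  obtain ⟨e₁, he₁, e₂, he₂, he⟩ := Ideal.isCoprime_iff_exists.mp hcop
  refine mem_primChars_iff.mpr ⟨⟨by simp [h₁.1.1, h₂.1.1], fun x y => ?_⟩, fun x z hz => ?_,
    fun I hI => ?_⟩
  · simp only [Pi.mul_apply, h₁.1.2, h₂.1.2]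
    ring
  · simp only [Pi.mul_apply, h₁.2.1 x z (Ideal.mul_le_left hz), h₂.2.1 x z (Ideal.mul_le_right hz)]
  · rw [Ideal.mul_eq_inf_of_isCoprime hcop]
    refine le_inf ((mem_primChars_iff.mp h₁).2.2 I ?_) ((mem_primChars_iff.mp h₂).2.2 I ?_)
    · exact isCharModI_of_isCharModI_mul he he₁ he₂ h₁ h₂ hI
    · exact isCharModI_of_isCharModI_mul (add_comm e₁ e₂ ▸ he) he₂ he₁ h₂ h₁ (mul_comm σ₁ σ₂ ▸ hI)

lemma comp_mul_mem_primChars (hb₂ : 𝔟₂ ≠ ⊥) (he : e₁ + e₂ = 1) (he₁ : e₁ ∈ 𝔟₁)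
    (he₂ : e₂ ∈ 𝔟₂) (hσ : σ ∈ PrimChars K (𝔟₁ * 𝔟₂)) :
    (fun x => σ (e₂ * x)) ∈ PrimChars K 𝔟₁ := by
  obtain ⟨⟨h0, hadd⟩, hper, hmax⟩ := mem_primChars_iff.mp hσ
  refine mem_primChars_iff.mpr ⟨⟨by simpa using h0, fun x y => by simp only [mul_add, hadd]⟩,
    fun x z hz => ?_, fun I hI => ?_⟩
  · simp only [mul_add]
    exact hper _ _ (mul_comm z e₂ ▸ Ideal.mul_mem_mul hz he₂)
  · have hI₂ : I * 𝔟₂ ≤ 𝔟₁ * 𝔟₂ := hmax _ <| isCharModI_of_apply_eq_one hadd fun z hz => by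
      have h₂ : σ (e₂ * z) = 1 := hI.apply_eq_one (by simpa using h0) (Ideal.mul_le_left hz)
      calc σ z = σ (e₁ * z) * σ (e₂ * z) := by rw [← hadd]; congr 1; linear_combination (-z) * he
        _ = 1 := by
          rw [hper.apply_eq_one h0 (Ideal.mul_mem_mul he₁ (Ideal.mul_le_right hz)), h₂, one_mul]
    rwa [← Ideal.dvd_iff_le, mul_dvd_mul_iff_right hb₂, Ideal.dvd_iff_le] at hI₂

/-- `(σ₁, σ₂) ↦ σ₁ σ₂`, with inverse `σ ↦ (σ (e₂ ·), σ (e₁ ·))` where `e₁ + e₂ = 1`,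
`e₁ ∈ 𝔟₁`, `e₂ ∈ 𝔟₂`. -/
lemma bijOn_mul_primChars (hb₁ : 𝔟₁ ≠ ⊥) (hb₂ : 𝔟₂ ≠ ⊥) (hcop : IsCoprime 𝔟₁ 𝔟₂) :
    Set.BijOn (fun p : (𝓞 K → ℂ) × (𝓞 K → ℂ) => p.1 * p.2)
      (PrimChars K 𝔟₁ ×ˢ PrimChars K 𝔟₂) (PrimChars K (𝔟₁ * 𝔟₂)) := by
  obtain ⟨e₁, he₁, e₂, he₂, he⟩ := Ideal.isCoprime_iff_exists.mp hcop
  have he' : e₂ + e₁ = 1 := add_comm e₁ e₂ ▸ he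
  refine Set.InvOn.bijOn (f' := fun σ => (fun x => σ (e₂ * x), fun x => σ (e₁ * x)))
    ⟨fun p hp => ?_, fun σ hσ => ?_⟩ (fun p hp => mul_mem_primChars hcop hp.1 hp.2)
    fun σ hσ => ⟨comp_mul_mem_primChars hb₂ he he₁ he₂ hσ,
      comp_mul_mem_primChars hb₁ he' he₂ he₁ (mul_comm 𝔟₁ 𝔟₂ ▸ hσ)⟩
  · obtain ⟨h₁, h₂⟩ := hp
    refine Prod.ext (funext fun x => ?_) (funext fun x => ?_)
    · simp only [Pi.mul_apply, h₁.2.1.apply_mul_eq he he₁,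
        h₂.2.1.apply_eq_one h₂.1.1 (𝔟₂.mul_mem_right x he₂), mul_one]
    · simp only [Pi.mul_apply, h₂.2.1.apply_mul_eq he' he₂,
        h₁.2.1.apply_eq_one h₁.1.1 (𝔟₁.mul_mem_right x he₁), one_mul]
  · funext x
    simp only [Pi.mul_apply, ← hσ.1.2]
    congr 1
    linear_combination x * he

end CRT

section ExpSum

variable {K : Type*} [Field K] [NumberField K] {n : ℕ}
  {c : Fin n → Fin n → (K ≃ₐ[ℚ] K) → (K ≃ₐ[ℚ] K) → 𝓞 K}

lemma expSum_zero (𝔟 : Ideal (𝓞 K)) (R : Finset (Fin n → 𝓞 K)) (N : 𝓞 K) :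
    expSum c 𝔟 R N (fun _ => (0 : K)) = ∑ᶠ σ ∈ PrimChars K 𝔟, ∑ a ∈ R, σ (gqf c a - N) := by
  simp [expSum, psiK]

lemma IsCharModI.apply_gqf_sub_eq {G : Set (K ≃ₐ[ℚ] K)}
    (hG : ∀ i j τ τ', c i j τ τ' ≠ 0 → τ ∈ G ∧ τ' ∈ G) {𝔞 : Ideal (𝓞 K)} {σ : 𝓞 K → ℂ}
    (hσ : IsCharModI 𝔞 σ) (N : 𝓞 K) {x y : Fin n → 𝓞 K}
    (hxy : ∀ i, Ideal.Quotient.mk (GIdeal G 𝔞) (x i) = Ideal.Quotient.mk _ (y i)) :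
    σ (gqf c x - N) = σ (gqf c y - N) :=
  hσ.apply_eq_of_sub_mem <| by
    rw [sub_sub_sub_cancel_right]
    exact gqf_sub_gqf_mem hG fun i => Ideal.Quotient.eq.mp (hxy i)

end ExpSum

theorem expSum_multiplicative_at_zero_general
    (K : Type*) [Field K] [NumberField K] (n : ℕ)
    (c : Fin n → Fin n → (K ≃ₐ[ℚ] K) → (K ≃ₐ[ℚ] K) → 𝓞 K)
    (G : Set (K ≃ₐ[ℚ] K))
    (hG : ∀ i j τ τ', c i j τ τ' ≠ 0 → τ ∈ G ∧ τ' ∈ G)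
    (𝔟 𝔟₁ 𝔟₂ : Ideal (𝓞 K)) (h𝔟 : 𝔟 = 𝔟₁ * 𝔟₂) (hb : 𝔟 ≠ ⊥)
    (hcop : Nat.Coprime (Ideal.absNorm 𝔟₁) (Ideal.absNorm 𝔟₂))
    (R R₁ R₂ : Finset (Fin n → 𝓞 K))
    (hR : ∀ x : Fin n → 𝓞 K, ∃! r, r ∈ R ∧ ∀ i, x i - r i ∈ GIdeal G 𝔟)
    (hR₁ : ∀ x : Fin n → 𝓞 K, ∃! r, r ∈ R₁ ∧ ∀ i, x i - r i ∈ GIdeal G 𝔟₁)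
    (hR₂ : ∀ x : Fin n → 𝓞 K, ∃! r, r ∈ R₂ ∧ ∀ i, x i - r i ∈ GIdeal G 𝔟₂)
    (N : 𝓞 K) :
    expSum c 𝔟 R N (fun _ => (0 : K)) =
      expSum c 𝔟₁ R₁ N (fun _ => (0 : K)) *
        expSum c 𝔟₂ R₂ N (fun _ => (0 : K)) := by
  subst h𝔟
  obtain ⟨hb₁, hb₂⟩ : 𝔟₁ ≠ ⊥ ∧ 𝔟₂ ≠ ⊥ := by simpa [Submodule.zero_eq_bot] using hb
  have hcopG := isCoprime_GIdeal_of_coprime_absNorm G hcop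
  have hcop𝔟 : IsCoprime 𝔟₁ 𝔟₂ := Ideal.isCoprime_of_coprime_absNorm hcop
  have hR' : IsResidueSystem (GIdeal G 𝔟₁ ⊓ GIdeal G 𝔟₂) R := by
    rwa [← GIdeal_inf, ← Ideal.mul_eq_inf_of_isCoprime hcop𝔟]
  rw [expSum_zero, expSum_zero, expSum_zero,
    finsum_mem_mul_finsum_mem (finite_primChars hb₁) (finite_primChars hb₂)]
  refine (finsum_mem_eq_of_bijOn _ (bijOn_mul_primChars hb₁ hb₂ hcop𝔟) fun p hp => ?_).symm
  exact IsResidueSystem.sum_mul_sum hcopG hR₁ hR₂ hR'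
    (fun _ _ => hp.1.2.1.apply_gqf_sub_eq hG N) (fun _ _ => hp.2.2.1.apply_gqf_sub_eq hG N)

/-- Let `𝔟 = 𝔟₁ 𝔟₂` with `gcd(N𝔟₁, N𝔟₂) = 1`.  Then
`S_𝔟(N; 0) = S_{𝔟₁}(N; 0) · S_{𝔟₂}(N; 0)`: the complete sum `S_𝔟(N; 0)` is
multiplicative over norm-coprime factorisations. -/
theorem expSum_multiplicative_at_zero
    (K : Type*) [Field K] [NumberField K] [IsGalois ℚ K] (n : ℕ)
    (c : Fin n → Fin n → (K ≃ₐ[ℚ] K) → (K ≃ₐ[ℚ] K) → 𝓞 K)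
    (hsym : ∀ i j τ τ', c i j τ τ' = c j i τ' τ)
    (G : Set (K ≃ₐ[ℚ] K))
    (hG : ∀ i j τ τ', c i j τ τ' ≠ 0 → τ ∈ G ∧ τ' ∈ G)
    (𝔟 𝔟₁ 𝔟₂ : Ideal (𝓞 K)) (h𝔟 : 𝔟 = 𝔟₁ * 𝔟₂) (hb : 𝔟 ≠ ⊥)
    (hcop : Nat.Coprime (Ideal.absNorm 𝔟₁) (Ideal.absNorm 𝔟₂))
    (R R₁ R₂ : Finset (Fin n → 𝓞 K))
    (hR : ∀ x : Fin n → 𝓞 K, ∃! r, r ∈ R ∧ ∀ i, x i - r i ∈ GIdeal G 𝔟)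
    (hR₁ : ∀ x : Fin n → 𝓞 K, ∃! r, r ∈ R₁ ∧ ∀ i, x i - r i ∈ GIdeal G 𝔟₁)
    (hR₂ : ∀ x : Fin n → 𝓞 K, ∃! r, r ∈ R₂ ∧ ∀ i, x i - r i ∈ GIdeal G 𝔟₂)
    (N : 𝓞 K) :
    expSum c 𝔟 R N (fun _ => (0 : K)) =
      expSum c 𝔟₁ R₁ N (fun _ => (0 : K)) *
        expSum c 𝔟₂ R₂ N (fun _ => (0 : K)) :=
  expSum_multiplicative_at_zero_general K n c G hG 𝔟 𝔟₁ 𝔟₂ h𝔟 hb hcop R R₁ R₂ hR hR₁ hR₂ N
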